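/- Each coset D'_i = D'_0 + e_i (0 ≤ i ≤ n, e_0 = 0) of a linear perfect independent dominating set D'_0 of Q_n (n = 2^m − 1) is balanced: it contains equally many vertices of even weight and of odd weight. -/

import Mathlib

open Finset

lemma zmod2_aux : ∀ a b : ZMod 2, a + b = if a ≠ b then 1 else 0 := by decide

lemma parity_dist {n : ℕ} (v u : Fin n → ZMod 2) :
    ∑ i, v i + ∑ i, u i = (hammingDist v u : ZMod 2) := by
  rw [hammingDist, ← Finset.sum_add_distrib, Finset.card_filter, Nat.cast_sum]
  refine Finset.sum_congr rfl fun i _ => ?_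
  rw [zmod2_aux]
  split <;> simp

lemma dist_one_iff {n : ℕ} (v u : Fin n → ZMod 2) :
    hammingDist v u = 1 ↔ ∃ i, v = u + Pi.single i 1 := by
  constructor
  · intro h
    rw [hammingDist, Finset.card_eq_one] at h
    obtain ⟨i, hi⟩ := h
    refine ⟨i, funext fun j => ?_⟩
    by_cases hj : j = i
    · subst hj
      have hmem : j ∈ Finset.univ.filter fun k => v k ≠ u k := by rw [hi]; simp
      simp only [Finset.mem_filter, Finset.mem_univ, true_and] at hmem
      have := (show ∀ a b : ZMod 2, a ≠ b → a = b + 1 by decide) _ _ hmem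
      simpa using this
    · have hn : j ∉ Finset.univ.filter fun k => v k ≠ u k := by rw [hi]; simp [hj]
      simp only [Finset.mem_filter, Finset.mem_univ, true_and, not_not] at hn
      simp [hn, Pi.single_eq_of_ne hj]
  · rintro ⟨i, rfl⟩
    rw [hammingDist]
    have : (Finset.univ.filter fun j => (u j + (Pi.single i 1 : Fin n → ZMod 2) j) ≠ u j) = {i} := by
      ext j
      simp only [Finset.mem_filter, Finset.mem_univ, true_and, Finset.mem_singleton]
      by_cases hj : j = i
      · subst hj; simp
      · simp [Pi.single_eq_of_ne hj, hj]
    simpa only [Pi.add_apply, Finset.card_singleton] using congrArg Finset.card this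

lemma sphere_card {n : ℕ} (u : Fin n → ZMod 2) :
    (Finset.univ.filter fun v => hammingDist v u = 1).card = n := by
  have himg : (Finset.univ.filter fun v => hammingDist v u = 1) =
      Finset.univ.image (fun i : Fin n => u + Pi.single i 1) := by
    ext v
    simp only [Finset.mem_filter, Finset.mem_univ, true_and, Finset.mem_image]
    rw [dist_one_iff]
    constructor
    · rintro ⟨i, hi⟩; exact ⟨i, hi.symm⟩
    · rintro ⟨i, hi⟩; exact ⟨i, hi.symm⟩
  rw [himg, Finset.card_image_of_injective _ ?_, Finset.card_univ, Fintype.card_fin]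
  intro i j hij
  have h2 := congrFun hij i
  simp only [Pi.add_apply] at h2
  have h3 := (show ∀ a b c : ZMod 2, a + b = a + c → b = c by decide) _ _ _ h2
  by_contra hne
  rw [Pi.single_eq_of_ne hne] at h3
  simp at h3

lemma sum_flip {n : ℕ} (v : Fin n → ZMod 2) (i0 : Fin n) :
    ∑ i, (v + (Pi.single i0 1 : Fin n → ZMod 2)) i = ∑ i, v i + 1 := by
  have h := parity_dist (v + Pi.single i0 1) v
  rw [(dist_one_iff (v + Pi.single i0 1) v).2 ⟨i0, rfl⟩] at h
  have := (show ∀ a b : ZMod 2, a + b = 1 → a = b + 1 by decide) _ _ h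
  simpa using this

lemma self_cancel {n : ℕ} (v : Fin n → ZMod 2) : v + v = 0 := by
  funext j
  exact (show ∀ a : ZMod 2, a + a = 0 by decide) _

lemma odd_card {n : ℕ} (hn : 1 ≤ n) :
    (Finset.univ.filter fun v : Fin n → ZMod 2 => ∑ i, v i = 1).card = 2 ^ (n - 1) := by
  classical
  set O := Finset.univ.filter fun v : Fin n → ZMod 2 => ∑ i, v i = 1 with hO
  set E := Finset.univ.filter fun v : Fin n → ZMod 2 => ∑ i, v i = 0 with hE
  have i0 : Fin n := ⟨0, hn⟩
  have key : ∀ v : Fin n → ZMod 2, v ∈ E ↔ v + Pi.single i0 1 ∈ O := by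
    intro v
    simp only [hO, hE, Finset.mem_filter, Finset.mem_univ, true_and, sum_flip]
    constructor
    · intro h; rw [h]; decide
    · intro h; exact (show ∀ a : ZMod 2, a + 1 = 1 → a = 0 by decide) _ h
  have hcardeq : E.card = O.card := by
    apply Finset.card_bij (fun v _ => v + Pi.single i0 1)
    · intro v hv; exact (key v).1 hv
    · intro a _ b _ hab
      have := congrArg (· + (Pi.single i0 1 : Fin n → ZMod 2)) hab
      simpa [add_assoc, self_cancel] using this
    · intro v hv
      refine ⟨v + Pi.single i0 1, ?_, by simp [add_assoc, self_cancel]⟩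
      rw [key, add_assoc, self_cancel, add_zero]; exact hv
  have hEfilter : E = Finset.univ.filter fun v : Fin n → ZMod 2 => ¬ (∑ i, v i = 1) := by
    rw [hE]
    apply Finset.filter_congr
    intro v _
    constructor
    · intro h h1; rw [h1] at h; exact (show (1:ZMod 2) ≠ 0 by decide) h
    · intro h; exact (show ∀ a : ZMod 2, a ≠ 1 → a = 0 by decide) _ h
  have hsum : O.card + E.card = 2 ^ n := by
    rw [hEfilter, hO, Finset.card_filter_add_card_filter_not, Finset.card_univ]
    simp
  have h2n : 2 ^ n = 2 * 2 ^ (n - 1) := by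
    rw [← pow_succ']
    congr 1
    omega
  omega

def Q (n : ℕ) : SimpleGraph (Fin n → ZMod 2) where
  Adj x y := hammingDist x y = 1
  symm := ⟨fun x y h => by change hammingDist x y = 1 at h; change hammingDist y x = 1; rwa [hammingDist_comm]⟩
  loopless := ⟨fun x h => by change hammingDist x x = 1 at h; simp [hammingDist_self] at h⟩

/-- A perfect independent dominating set: an independent set such that every vertex
outside of it is adjacent to exactly one of its vertices. -/
def IsPID {V : Type*} (G : SimpleGraph V) (D : Set V) : Prop :=
  (∀ u ∈ D, ∀ v ∈ D, ¬ G.Adj u v) ∧ ∀ v ∉ D, ∃! u, u ∈ D ∧ G.Adj v u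

lemma exists_odd (m n : ℕ) (hm : 2 ≤ m) (hn : n = 2 ^ m - 1)
    (D0 : Submodule (ZMod 2) (Fin n → ZMod 2))
    (hpid : IsPID (Q n) (D0 : Set (Fin n → ZMod 2))) :
    ∃ w ∈ D0, ∑ i, w i = 1 := by
  classical
  by_contra hcon
  push_neg at hcon
  have heven : ∀ w ∈ D0, ∑ i, w i = 0 := fun w hw =>
    (show ∀ a : ZMod 2, a ≠ 1 → a = 0 by decide) _ (hcon w hw)
  have hn1 : 1 ≤ n := by
    have : 4 ≤ 2 ^ m := by
      calc (4:ℕ) = 2 ^ 2 := rfl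
      _ ≤ 2 ^ m := Nat.pow_le_pow_right (by norm_num) hm
    omega
  -- the set of odd vectors
  set O := Finset.univ.filter fun v : Fin n → ZMod 2 => ∑ i, v i = 1 with hO
  set D0f := Finset.univ.filter fun v : Fin n → ZMod 2 => v ∈ D0 with hD0f
  -- each odd vector is not in D0
  have hnotin : ∀ v ∈ O, v ∉ (D0 : Set (Fin n → ZMod 2)) := by
    intro v hv hvD
    rw [hO, Finset.mem_filter] at hv
    rw [heven v hvD] at hv
    exact (show (0:ZMod 2) ≠ 1 by decide) hv.2
  -- the dominating-vertex function
  have hf : ∀ v ∈ O, ∃ u, (u ∈ D0 ∧ (Q n).Adj v u) ∧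
      ∀ u', u' ∈ D0 ∧ (Q n).Adj v u' → u' = u := by
    intro v hv
    obtain ⟨u, hu, huniq⟩ := hpid.2 v (hnotin v hv)
    exact ⟨u, hu, huniq⟩
  set f : (Fin n → ZMod 2) → (Fin n → ZMod 2) := fun v =>
    if h : v ∈ O then (hf v h).choose else 0 with hfdef
  have hfspec : ∀ v ∈ O, (f v ∈ D0 ∧ (Q n).Adj v (f v)) ∧
      ∀ u', u' ∈ D0 ∧ (Q n).Adj v u' → u' = f v := by
    intro v hv
    simp only [hfdef, dif_pos hv]
    exact (hf v hv).choose_spec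
  have hmaps : ∀ v ∈ O, f v ∈ D0f := by
    intro v hv
    rw [hD0f, Finset.mem_filter]
    exact ⟨Finset.mem_univ _, (hfspec v hv).1.1⟩
  have hcount := Finset.card_eq_sum_card_fiberwise hmaps
  -- each fiber is a sphere
  have hfiber : ∀ u ∈ D0f, (O.filter fun v => f v = u).card = n := by
    intro u hu
    rw [hD0f, Finset.mem_filter] at hu
    have : (O.filter fun v => f v = u) = Finset.univ.filter fun v => hammingDist v u = 1 := by
      ext v
      simp only [Finset.mem_filter, Finset.mem_univ, true_and]
      constructor
      · rintro ⟨hvO, rfl⟩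
        exact (hfspec v hvO).1.2
      · intro hdist
        have hvO : v ∈ O := by
          rw [hO, Finset.mem_filter]
          refine ⟨Finset.mem_univ _, ?_⟩
          have := parity_dist v u
          rw [hdist, heven u hu.2] at this
          simpa using this
        refine ⟨hvO, ((hfspec v hvO).2 u ⟨hu.2, hdist⟩).symm⟩
    rw [this, sphere_card]
  have hOcard : O.card = D0f.card * n := by
    rw [hcount]
    rw [Finset.sum_congr rfl hfiber, Finset.sum_const, smul_eq_mul]
  rw [odd_card hn1] at hOcard
  -- n odd, n > 1, n ∣ 2^(n-1): contradiction
  have hodd : Odd n := by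
    have : 2 ∣ 2 ^ m := dvd_pow_self 2 (by omega)
    obtain ⟨k, hk⟩ := this
    rw [hn, hk]
    exact ⟨k - 1, by omega⟩
  have hdvd : n ∣ 2 ^ (n - 1) := ⟨D0f.card, by rw [hOcard, Nat.mul_comm]⟩
  have hcop : Nat.Coprime n 2 := Nat.coprime_two_right.2 hodd
  have h1 := Nat.Coprime.eq_one_of_dvd (Nat.Coprime.pow_right _ hcop) hdvd
  have h4 : 4 ≤ 2 ^ m := by
    calc (4:ℕ) = 2 ^ 2 := rfl
    _ ≤ 2 ^ m := Nat.pow_le_pow_right (by norm_num) hm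
  omega

/-- Each coset `D'_0 + e_i` (with `e_0 = 0`) of a linear perfect independent dominating set
`D'_0` of `Q_n` (`n = 2^m - 1`) is balanced: it contains equally many vertices of even
weight and of odd weight. -/
theorem stmt4 (m n : ℕ) (hm : 2 ≤ m) (hn : n = 2 ^ m - 1)
    (D0 : Submodule (ZMod 2) (Fin n → ZMod 2))
    (hpid : IsPID (Q n) (D0 : Set (Fin n → ZMod 2)))
    (e : Fin n → ZMod 2) (he : e = 0 ∨ ∃ i : Fin n, e = Pi.single i 1) :
    {v ∈ (· + e) '' (D0 : Set (Fin n → ZMod 2)) | ∑ i, v i = 0}.ncard =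
      {v ∈ (· + e) '' (D0 : Set (Fin n → ZMod 2)) | ∑ i, v i = 1}.ncard := by
  classical
  obtain ⟨w, hwD, hw⟩ := exists_odd m n hm hn D0 hpid
  have himg : {v ∈ (· + e) '' (D0 : Set (Fin n → ZMod 2)) | ∑ i, v i = 1} =
      (· + w) '' {v ∈ (· + e) '' (D0 : Set (Fin n → ZMod 2)) | ∑ i, v i = 0} := by
    ext v
    simp only [Set.mem_setOf_eq, Set.mem_image, Set.mem_sep_iff, SetLike.mem_coe]
    constructor
    · rintro ⟨⟨d, hd, rfl⟩, hpar⟩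
      refine ⟨d + w + e, ⟨⟨d + w, D0.add_mem hd hwD, rfl⟩, ?_⟩, ?_⟩
      · have : ∑ i, (d + w + e) i = ∑ i, (d + e) i + ∑ i, w i := by
          rw [← Finset.sum_add_distrib]
          congr 1; funext i; simp; ring
        rw [this, hpar, hw]; decide
      · funext i; simp only [Pi.add_apply]
        have := (show ∀ a b c : ZMod 2, a + b + c + b = a + c by decide) (d i) (w i) (e i)
        linear_combination (norm := ring_nf) this - this + this
    · rintro ⟨u, ⟨⟨d, hd, rfl⟩, hpar⟩, rfl⟩
      refine ⟨⟨d + w, D0.add_mem hd hwD, by funext i; simp; ring⟩, ?_⟩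
      have : ∑ i, (d + e + w) i = ∑ i, (d + e) i + ∑ i, w i := Finset.sum_add_distrib
      rw [this, hpar, hw]; decide
  rw [himg, Set.ncard_image_of_injective _ (add_left_injective w)]
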